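/- Let g ∈ 𝒢_N and σ ≥ 0, and let I ⊆ V_N be an integer interval with |I| ≤ N/4 and such that I contains at least one regular vertex in its middle third. Then there exists a set Φ ⊆ E(g) of at most N^σ edges, all of Euclidean length at least N^δ, each incident to at least one vertex of the interior of I, and a decomposition I = I' ∪ I'' into intervals with disjoint interiors with |I''| ≤ 3|I|/4, such that the number of ground edges e ⊆ I' covered by no edge of Φ is at most 2·N^{σ+δ}. -/

import Mathlib

open scoped Classical

/-- The Euclidean length of an edge of a graph on `Fin N`. -/
def elen {N : ℕ} (e : Sym2 (Fin N)) : ℕ :=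
  Sym2.lift ⟨fun (x y : Fin N) => max (x : ℕ) (y : ℕ) - min (x : ℕ) (y : ℕ), fun a b => by
    simp [Nat.max_comm, Nat.min_comm]⟩ e

/-- The smaller endpoint of an edge. -/
def eminv {N : ℕ} (e : Sym2 (Fin N)) : ℕ :=
  Sym2.lift ⟨fun (x y : Fin N) => min (x : ℕ) (y : ℕ), fun a b => by
    simp [Nat.min_comm]⟩ e

/-- The larger endpoint of an edge. -/
def emaxv {N : ℕ} (e : Sym2 (Fin N)) : ℕ :=
  Sym2.lift ⟨fun (x y : Fin N) => max (x : ℕ) (y : ℕ), fun a b => by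
    simp [Nat.max_comm]⟩ e

/-- `x` is a regular vertex of `g`: some vertex at Euclidean distance at least `N/4`
from `x` is within graph distance `N^σ` of `x`. -/
def Regular {N : ℕ} (g : SimpleGraph (Fin N)) (σ : ℝ) (x : Fin N) : Prop :=
  ∃ y : Fin N, (N : ℝ) / 4 ≤ |((y : ℕ) : ℝ) - ((x : ℕ) : ℝ)| ∧ (g.dist x y : ℝ) ≤ (N : ℝ) ^ σ

lemma elen_mk {N : ℕ} (v w : Fin N) : elen s(v,w) = max (v:ℕ) (w:ℕ) - min (v:ℕ) (w:ℕ) := rfl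

lemma eminv_mk {N : ℕ} (v w : Fin N) : eminv s(v,w) = min (v:ℕ) (w:ℕ) := rfl

lemma emaxv_mk {N : ℕ} (v w : Fin N) : emaxv s(v,w) = max (v:ℕ) (w:ℕ) := rfl

lemma elen_eq {N : ℕ} (e : Sym2 (Fin N)) : elen e = emaxv e - eminv e := by
  induction e using Sym2.ind with
  | _ v w => rfl

lemma coe_finset_val {N : ℕ} (s : Finset (Fin N)) :
    (s : Finset ℕ) = s.image Fin.val := by
  simp only [Finset.bind_def, Finset.sup_eq_biUnion, Finset.pure_def, Finset.biUnion_singleton]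
  congr!

/-- crossing lemma: a trajectory starting at or below `u` and ending above `u`
crosses the cut `{u, u+1}` at some step. -/
lemma exists_cross (f : ℕ → ℕ) (T u : ℕ) (h0 : f 0 ≤ u) (hT : u < f T) :
    ∃ m, m < T ∧ f m ≤ u ∧ u + 1 ≤ f (m + 1) := by
  have hex : ∃ i, u < f i := ⟨T, hT⟩
  have hk := Nat.find_spec hex
  have hkT : Nat.find hex ≤ T := Nat.find_le hT
  have hk0 : Nat.find hex ≠ 0 := by
    intro h; rw [h] at hk; omega
  obtain ⟨m, hm⟩ := Nat.exists_eq_succ_of_ne_zero hk0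
  have h1 : ¬ u < f m := Nat.find_min hex (by omega)
  have h2 : u < f (m + 1) := by rw [hm] at hk; exact hk
  exact ⟨m, by omega, by omega, by omega⟩

/-- a graph containing all ground edges is preconnected -/
lemma reach_aux {N : ℕ} {g : SimpleGraph (Fin N)}
    (hg : ∀ x y : Fin N, (x : ℕ) + 1 = (y : ℕ) → g.Adj x y) (u v : Fin N) :
    g.Reachable u v := by
  suffices h : ∀ d : ℕ, ∀ u v : Fin N, (v:ℕ) = (u:ℕ) + d → g.Reachable u v by
    rcases le_total (u:ℕ) (v:ℕ) with h' | h'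
    · exact h ((v:ℕ) - (u:ℕ)) u v (by omega)
    · exact (h ((u:ℕ) - (v:ℕ)) v u (by omega)).symm
  intro d
  induction d with
  | zero =>
    intro u v h
    have : u = v := Fin.ext (by omega)
    exact this ▸ SimpleGraph.Reachable.refl u
  | succ d ih =>
    intro u v h
    have hw : (u:ℕ) + d < N := by have := v.isLt; omega
    have h1 : g.Reachable u ⟨(u:ℕ) + d, hw⟩ := ih u _ rfl
    have h2 : g.Adj ⟨(u:ℕ) + d, hw⟩ v := hg _ _ (by show (u:ℕ) + d + 1 = (v:ℕ); omega)
    exact h1.trans h2.reachable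

/-- counting lemma: if every element of `S` is covered by a "short" edge among
`T` candidate edges, then `S` has at most `T * D` elements. -/
lemma count_aux {N : ℕ} {D : ℝ} (hD : 0 ≤ D) (T : ℕ) (E : ℕ → Sym2 (Fin N))
    (S : Finset ℕ)
    (hS : ∀ u' ∈ S, ∃ m, m < T ∧ ((elen (E m) : ℝ) < D) ∧
      eminv (E m) ≤ u' ∧ u' + 1 ≤ emaxv (E m)) :
    (S.card : ℝ) ≤ T * D := by
  classical
  set C : ℕ → Finset ℕ := fun i =>
    if ((elen (E i):ℝ) < D) then Finset.Ico (eminv (E i)) (emaxv (E i)) else ∅ with hC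
  have hsub : S ⊆ (Finset.range T).biUnion C := by
    intro u' hu'
    obtain ⟨m, hm, h1, h2, h3⟩ := hS u' hu'
    refine Finset.mem_biUnion.mpr ⟨m, Finset.mem_range.mpr hm, ?_⟩
    rw [hC]
    simp only [if_pos h1]
    exact Finset.mem_Ico.mpr ⟨h2, Nat.lt_of_succ_le h3⟩
  have hCcard : ∀ i, ((C i).card : ℝ) ≤ D := by
    intro i
    rw [hC]
    by_cases h : (elen (E i):ℝ) < D
    · simp only [if_pos h]
      rw [Nat.card_Ico]
      calc ((emaxv (E i) - eminv (E i) : ℕ) : ℝ) = (elen (E i) : ℝ) := by rw [← elen_eq]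
        _ ≤ D := h.le
    · simp only [if_neg h]
      simpa using hD
  calc (S.card : ℝ) ≤ (((Finset.range T).biUnion C).card : ℝ) := by
        exact_mod_cast Finset.card_le_card hsub
    _ ≤ ∑ i ∈ Finset.range T, ((C i).card : ℝ) := by
        exact_mod_cast Finset.card_biUnion_le
    _ ≤ ∑ _i ∈ Finset.range T, D := Finset.sum_le_sum (fun i _ => hCcard i)
    _ = T * D := by simp [Finset.sum_const, Finset.card_range, nsmul_eq_mul]

set_option maxHeartbeats 2000000 in
theorem stmt17 (σ δ : ℝ) (hσ : 0 < σ) (hδ : 0 < δ) :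
    ∃ N₀ : ℕ, ∀ N ≥ N₀, ∀ g : SimpleGraph (Fin N),
      (∀ x y : Fin N, (x : ℕ) + 1 = (y : ℕ) → g.Adj x y) →
      ∀ a b : Fin N, a ≤ b →
      ((Finset.Icc a b).card : ℝ) ≤ (N : ℝ) / 4 →
      -- the middle third of `I = {a,…,b}` contains a regular vertex
      (∃ x ∈ Finset.Icc a b,
        ((a : ℕ) : ℝ) + ((Finset.Icc a b).card : ℝ) / 3 ≤ ((x : ℕ) : ℝ) ∧
        ((x : ℕ) : ℝ) ≤ ((a : ℕ) : ℝ) + 2 * ((Finset.Icc a b).card : ℝ) / 3 ∧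
        Regular g σ x) →
      ∃ (Φ : Finset (Sym2 (Fin N))) (c : Fin N) (I' I'' : Finset (Fin N)),
        (∀ e ∈ Φ, e ∈ g.edgeSet) ∧
        ((Φ.card : ℝ) ≤ (N : ℝ) ^ σ) ∧
        (∀ e ∈ Φ, (N : ℝ) ^ δ ≤ (elen e : ℝ)) ∧
        -- each edge of Φ is incident to a vertex of the interior of I
        (∀ e ∈ Φ, ∃ v ∈ e, a < v ∧ v < b) ∧
        -- decomposition I = I' ∪ I'' into intervals with disjoint interiors
        c ∈ Finset.Icc a b ∧
        ((I' = Finset.Icc a c ∧ I'' = Finset.Icc c b) ∨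
         (I' = Finset.Icc c b ∧ I'' = Finset.Icc a c)) ∧
        ((I''.card : ℝ) ≤ 3 * ((Finset.Icc a b).card : ℝ) / 4) ∧
        -- at most 2·N^{σ+δ} ground edges of I' are covered by no edge of Φ
        (((I'.filter (fun x => (∃ y ∈ I', (x : ℕ) + 1 = (y : ℕ)) ∧
            ∀ e ∈ Φ, ¬(eminv e ≤ (x : ℕ) ∧ (x : ℕ) + 1 ≤ emaxv e))).card : ℝ)
          ≤ 2 * (N : ℝ) ^ (σ + δ)) := by
  refine ⟨max 2 (⌈(6:ℝ) ^ ((σ+δ)⁻¹)⌉₊ + 1), ?_⟩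
  intro N hN g hg a b hab hI hreg
  obtain ⟨x, hxI, hx1, hx2, y, hy1, hy2⟩ := hreg
  set K := (Finset.Icc a b).card with hKdef
  have hsd : 0 < σ + δ := by linarith
  have hN2 : 2 ≤ N := le_trans (le_max_left _ _) hN
  have hN0 : (0:ℝ) < N := by exact_mod_cast Nat.lt_of_lt_of_le (by norm_num) hN2
  have hN6 : (6:ℝ) ≤ (N:ℝ) ^ (σ + δ) := by
    have h1 : (⌈(6:ℝ) ^ ((σ+δ)⁻¹)⌉₊ + 1 : ℕ) ≤ N := le_trans (le_max_right _ _) hN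
    have h2 : (6:ℝ) ^ ((σ+δ)⁻¹) ≤ (N:ℝ) := by
      refine le_trans (Nat.le_ceil _) ?_
      exact_mod_cast Nat.le_of_succ_le h1
    calc (6:ℝ) = ((6:ℝ) ^ ((σ+δ)⁻¹)) ^ (σ+δ) :=
          (Real.rpow_inv_rpow (by norm_num) (ne_of_gt hsd)).symm
      _ ≤ (N:ℝ) ^ (σ+δ) := Real.rpow_le_rpow (Real.rpow_nonneg (by norm_num) _) h2 hsd.le
  have hax : a ≤ x ∧ x ≤ b := Finset.mem_Icc.mp hxI
  have haxn : (a:ℕ) ≤ (x:ℕ) := hax.1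
  have hxbn : (x:ℕ) ≤ (b:ℕ) := hax.2
  have habn : (a:ℕ) ≤ (b:ℕ) := hab
  have hKval : K = (b:ℕ) + 1 - (a:ℕ) := by rw [hKdef, Fin.card_Icc]
  have hKr : (K:ℝ) = ((b:ℕ):ℝ) + 1 - ((a:ℕ):ℝ) := by
    rw [hKval, Nat.cast_sub (by omega)]
    push_cast
    ring
  have hNσ : (0:ℝ) ≤ (N:ℝ) ^ σ := Real.rpow_nonneg hN0.le σ
  have hNδ : (0:ℝ) ≤ (N:ℝ) ^ δ := Real.rpow_nonneg hN0.le δ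
  have hNsd : (0:ℝ) ≤ (N:ℝ) ^ (σ + δ) := Real.rpow_nonneg hN0.le _
  by_cases hsmall : (K:ℝ) ≤ 2 * (N:ℝ) ^ (σ + δ)
  · -- trivial case: take Φ = ∅ and c = x
    refine ⟨∅, x, Finset.Icc a x, Finset.Icc x b, by simp, by simpa using hNσ,
      by simp, by simp, hxI, Or.inl ⟨rfl, rfl⟩, ?_, ?_⟩
    · -- |I''| ≤ 3K/4
      have hc : (Finset.Icc x b).card = (b:ℕ) + 1 - (x:ℕ) := Fin.card_Icc x b
      have hcr : ((Finset.Icc x b).card : ℝ) = ((b:ℕ):ℝ) + 1 - ((x:ℕ):ℝ) := by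
        rw [hc, Nat.cast_sub (by omega)]; push_cast; ring
      have hK0 : (0:ℝ) ≤ (K:ℝ) := Nat.cast_nonneg K
      rw [hcr]
      linarith
    · -- the count bound
      refine le_trans ?_ hsmall
      rw [hKdef, coe_finset_val]
      exact Nat.cast_le.mpr (le_trans (Finset.card_filter_le _ _)
        (le_trans Finset.card_image_le
          (Finset.card_le_card (Finset.Icc_subset_Icc_right hax.2))))
  · -- main case
    push_neg at hsmall
    have hK12 : (12:ℝ) ≤ (K:ℝ) := by linarith
    have hxa : (a:ℕ) < (x:ℕ) := by
      have : ((a:ℕ):ℝ) < ((x:ℕ):ℝ) := by linarith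
      exact_mod_cast this
    have hxb : (x:ℕ) < (b:ℕ) := by
      have : ((x:ℕ):ℝ) < ((b:ℕ):ℝ) := by linarith
      exact_mod_cast this
    obtain ⟨p, hp⟩ := (reach_aux hg x y).exists_walk_length_eq_dist
    set L := p.length with hLdef
    have hL : (L:ℝ) ≤ (N:ℝ) ^ σ := by rw [hp]; exact hy2
    set f : ℕ → ℕ := fun i => ((p.getVert i : Fin N) : ℕ) with hf
    have hf0 : f 0 = (x:ℕ) := by simp [hf]
    have hfL : f L = (y:ℕ) := by simp [hf, hLdef]
    have hyout : ¬((a:ℕ) < f L ∧ f L < (b:ℕ)) := by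
      rintro ⟨h1, h2⟩
      rw [hfL] at h1 h2
      have h1' : ((a:ℕ):ℝ) < ((y:ℕ):ℝ) := by exact_mod_cast h1
      have h2' : ((y:ℕ):ℝ) < ((b:ℕ):ℝ) := by exact_mod_cast h2
      have hxar : ((a:ℕ):ℝ) < ((x:ℕ):ℝ) := by exact_mod_cast hxa
      have hxbr : ((x:ℕ):ℝ) < ((b:ℕ):ℝ) := by exact_mod_cast hxb
      rcases abs_cases (((y:ℕ):ℝ) - ((x:ℕ):ℝ)) with ⟨he, -⟩ | ⟨he, -⟩ <;>
        rw [he] at hy1 <;> linarith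
    have hexit : ∃ i, ¬((a:ℕ) < f i ∧ f i < (b:ℕ)) := ⟨L, hyout⟩
    set T := Nat.find hexit with hTdef
    have hTL : T ≤ L := Nat.find_le hyout
    have hint : ∀ i, i < T → (a:ℕ) < f i ∧ f i < (b:ℕ) := by
      intro i hi
      have := Nat.find_min hexit hi
      tauto
    have hTspec : ¬((a:ℕ) < f T ∧ f T < (b:ℕ)) := Nat.find_spec hexit
    set Φ : Finset (Sym2 (Fin N)) :=
      ((Finset.range T).filter
        (fun i => (N:ℝ) ^ δ ≤ (elen s(p.getVert i, p.getVert (i+1)) : ℝ))).image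
        (fun i => s(p.getVert i, p.getVert (i+1))) with hΦ
    have hΦmem : ∀ e ∈ Φ, ∃ i, i < T ∧
        (N:ℝ) ^ δ ≤ (elen s(p.getVert i, p.getVert (i+1)) : ℝ) ∧
        e = s(p.getVert i, p.getVert (i+1)) := by
      intro e he
      rw [hΦ] at he
      obtain ⟨i, hi, rfl⟩ := Finset.mem_image.mp he
      obtain ⟨hi1, hi2⟩ := Finset.mem_filter.mp hi
      exact ⟨i, Finset.mem_range.mp hi1, hi2, rfl⟩
    have hΦin : ∀ i, i < T →
        (N:ℝ) ^ δ ≤ (elen s(p.getVert i, p.getVert (i+1)) : ℝ) →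
        s(p.getVert i, p.getVert (i+1)) ∈ Φ := by
      intro i hi hlong
      rw [hΦ]
      exact Finset.mem_image.mpr ⟨i, Finset.mem_filter.mpr ⟨Finset.mem_range.mpr hi, hlong⟩, rfl⟩
    -- the four Φ properties
    have hP1 : ∀ e ∈ Φ, e ∈ g.edgeSet := by
      intro e he
      obtain ⟨i, hi, -, rfl⟩ := hΦmem e he
      exact p.adj_getVert_succ (lt_of_lt_of_le hi hTL)
    have hP2 : (Φ.card : ℝ) ≤ (N:ℝ) ^ σ := by
      have h1 : Φ.card ≤ T := by
        rw [hΦ]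
        refine le_trans Finset.card_image_le (le_trans (Finset.card_filter_le _ _) ?_)
        simp
      calc (Φ.card : ℝ) ≤ (L:ℝ) := by exact_mod_cast le_trans h1 hTL
        _ ≤ (N:ℝ) ^ σ := hL
    have hP3 : ∀ e ∈ Φ, (N:ℝ) ^ δ ≤ (elen e : ℝ) := by
      intro e he
      obtain ⟨i, -, hlong, rfl⟩ := hΦmem e he
      exact hlong
    have hP4 : ∀ e ∈ Φ, ∃ v ∈ e, a < v ∧ v < b := by
      intro e he
      obtain ⟨i, hi, -, rfl⟩ := hΦmem e he
      refine ⟨p.getVert i, Sym2.mem_mk_left _ _, ?_, ?_⟩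
      · rw [Fin.lt_def]; exact (hint i hi).1
      · rw [Fin.lt_def]; exact (hint i hi).2
    -- key step: an uncovered cut crossed by a walk edge is crossed by a short walk edge
    have hkey : ∀ (u' : ℕ),
        (∀ e ∈ Φ, ¬(eminv e ≤ u' ∧ u' + 1 ≤ emaxv e)) →
        ∀ j, j < T → min (f j) (f (j+1)) ≤ u' → u' + 1 ≤ max (f j) (f (j+1)) →
        ∃ m, m < T ∧ ((elen s(p.getVert m, p.getVert (m+1)) : ℝ) < (N:ℝ)^δ) ∧
          eminv s(p.getVert m, p.getVert (m+1)) ≤ u' ∧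
          u' + 1 ≤ emaxv s(p.getVert m, p.getVert (m+1)) := by
      intro u' hunc j hj hmin hmax
      have hemin : eminv s(p.getVert j, p.getVert (j+1)) = min (f j) (f (j+1)) := by
        simp only [hf]; rfl
      have hemax : emaxv s(p.getVert j, p.getVert (j+1)) = max (f j) (f (j+1)) := by
        simp only [hf]; rfl
      by_cases hlong : (N:ℝ)^δ ≤ (elen s(p.getVert j, p.getVert (j+1)) : ℝ)
      · exact absurd ⟨by rw [hemin]; exact hmin, by rw [hemax]; exact hmax⟩
          (hunc _ (hΦin j hj hlong))
      · exact ⟨j, hj, lt_of_not_ge hlong, by rw [hemin]; exact hmin,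
          by rw [hemax]; exact hmax⟩
    -- final count, shared
    have hfinal : ∀ S : Finset ℕ,
        (∀ u' ∈ S, ∃ m, m < T ∧
          ((elen s(p.getVert m, p.getVert (m+1)) : ℝ) < (N:ℝ)^δ) ∧
          eminv s(p.getVert m, p.getVert (m+1)) ≤ u' ∧
          u' + 1 ≤ emaxv s(p.getVert m, p.getVert (m+1))) →
        (S.card : ℝ) ≤ 2 * (N:ℝ) ^ (σ + δ) := by
      intro S hS
      have h1 := count_aux hNδ T (fun i => s(p.getVert i, p.getVert (i+1))) S hS
      have hTr : (T:ℝ) ≤ (N:ℝ) ^ σ := by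
        calc (T:ℝ) ≤ (L:ℝ) := by exact_mod_cast hTL
          _ ≤ (N:ℝ) ^ σ := hL
      calc (S.card : ℝ) ≤ (T:ℝ) * (N:ℝ)^δ := h1
        _ ≤ (N:ℝ)^σ * (N:ℝ)^δ := mul_le_mul_of_nonneg_right hTr hNδ
        _ = (N:ℝ)^(σ+δ) := (Real.rpow_add hN0 σ δ).symm
        _ ≤ 2 * (N:ℝ)^(σ+δ) := by linarith
    rw [not_and_or, not_lt, not_lt] at hTspec
    rcases hTspec with hleft | hright
    · -- the walk exits on the left: I' = Icc a x, I'' = Icc x b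
      refine ⟨Φ, x, Finset.Icc a x, Finset.Icc x b, hP1, hP2, hP3, hP4, hxI,
        Or.inl ⟨rfl, rfl⟩, ?_, ?_⟩
      · have hc : (Finset.Icc x b).card = (b:ℕ) + 1 - (x:ℕ) := Fin.card_Icc x b
        have hcr : ((Finset.Icc x b).card : ℝ) = ((b:ℕ):ℝ) + 1 - ((x:ℕ):ℝ) := by
          rw [hc, Nat.cast_sub (by omega)]; push_cast; ring
        rw [hcr]
        linarith
      · rw [coe_finset_val]
        apply hfinal
        intro u' hu'
        have hmem := Finset.mem_filter.mp hu'
        obtain ⟨v, hvI, rfl⟩ := Finset.mem_image.mp hmem.1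
        obtain ⟨y', hy'I, hy'⟩ := hmem.2.1
        have hunc := hmem.2.2
        have hau : (a:ℕ) ≤ (v:ℕ) := (Finset.mem_Icc.mp hvI).1
        have huy : (v:ℕ) + 1 ≤ (x:ℕ) := by
          have hyx : (y':ℕ) ≤ (x:ℕ) := (Finset.mem_Icc.mp hy'I).2
          omega
        -- downward crossing
        obtain ⟨m, hm, h1, h2⟩ := exists_cross (fun i => f (T - i)) T (v:ℕ)
          (by simpa using le_trans hleft hau)
          (by simpa [hf0] using huy)
        have hjm : T - m = (T - m - 1) + 1 := by omega
        have hjm' : T - (m + 1) = T - m - 1 := by omega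
        rw [hjm] at h1
        rw [hjm'] at h2
        refine hkey (v:ℕ) hunc (T - m - 1) (by omega) ?_ ?_
        · exact le_trans (min_le_right _ _) h1
        · exact le_trans h2 (le_max_left _ _)
    · -- the walk exits on the right: I' = Icc x b, I'' = Icc a x
      refine ⟨Φ, x, Finset.Icc x b, Finset.Icc a x, hP1, hP2, hP3, hP4, hxI,
        Or.inr ⟨rfl, rfl⟩, ?_, ?_⟩
      · have hc : (Finset.Icc a x).card = (x:ℕ) + 1 - (a:ℕ) := Fin.card_Icc a x
        have hcr : ((Finset.Icc a x).card : ℝ) = ((x:ℕ):ℝ) + 1 - ((a:ℕ):ℝ) := by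
          rw [hc, Nat.cast_sub (by omega)]; push_cast; ring
        rw [hcr]
        linarith
      · rw [coe_finset_val]
        apply hfinal
        intro u' hu'
        have hmem := Finset.mem_filter.mp hu'
        obtain ⟨v, hvI, rfl⟩ := Finset.mem_image.mp hmem.1
        obtain ⟨y', hy'I, hy'⟩ := hmem.2.1
        have hunc := hmem.2.2
        have hxu : (x:ℕ) ≤ (v:ℕ) := (Finset.mem_Icc.mp hvI).1
        have hub : (v:ℕ) + 1 ≤ (b:ℕ) := by
          have hyb : (y':ℕ) ≤ (b:ℕ) := (Finset.mem_Icc.mp hy'I).2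
          omega
        obtain ⟨m, hm, h1, h2⟩ := exists_cross f T (v:ℕ)
          (by rw [hf0]; exact hxu) (by omega)
        refine hkey (v:ℕ) hunc m hm ?_ ?_
        · exact le_trans (min_le_left _ _) h1
        · exact le_trans h2 (le_max_right _ _)
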